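/- Let n ≥ 1 and let p ∈ ℂ[x₁,…,xₙ] be a nonconstant polynomial with integer coefficients whose zero set V(p) is allowable. Then there exist a nonzero integer c and a finite list of linear forms ℓ₁, …, ℓ_r, each equal to some x_i, x_i + x_j, or x_i − x_j, such that p = c · ℓ₁ ⋯ ℓ_r. -/

import Mathlib

/-!
Pick one hyperplane from each intersection in the description of `V(p)`; the product `f` of
the corresponding linear forms vanishes on `V(p)`, so `p ∣ f ^ N` by the Nullstellensatz.
The linear forms are irreducible, hence every prime factor of `p` is associated to one of
them, and `p` is a nonzero constant times a product of such forms. The constant is an integer: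
for any monomial order each form has leading coefficient `±1`, so up to sign the constant is
the leading coefficient of `p`, which has integer coefficients.
-/

/-- An allowable hyperplane in `ℂⁿ`: one of `{x_i = 0}`, `{x_i + x_j = 0}`, `{x_i - x_j = 0}`. -/
def IsAllowableHyperplane (n : ℕ) (H : Set (Fin n → ℂ)) : Prop :=
  (∃ i : Fin n, H = {x | x i = 0}) ∨
  (∃ i j : Fin n, i ≠ j ∧ H = {x | x i + x j = 0}) ∨
  (∃ i j : Fin n, i ≠ j ∧ H = {x | x i - x j = 0})

/-- An allowable set: a finite union of finite intersections of allowable hyperplanes. -/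
def IsAllowable (n : ℕ) (A : Set (Fin n → ℂ)) : Prop :=
  ∃ (k : ℕ) (m : Fin k → ℕ) (H : (i : Fin k) → Fin (m i) → Set (Fin n → ℂ)),
    (∀ i j, IsAllowableHyperplane n (H i j)) ∧ A = ⋃ i, ⋂ j, H i j

open MvPolynomial

namespace UniqueFactorizationMonoid

variable {α : Type*} [CommMonoidWithZero α] [UniqueFactorizationMonoid α]

theorem exists_associated_list_prod_of_forall_prime_dvd {P : α → Prop} {p : α} (hp : p ≠ 0)
    (h : ∀ g, Prime g → g ∣ p → ∃ ℓ, P ℓ ∧ Associated g ℓ) :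
    ∃ L : List α, (∀ ℓ ∈ L, P ℓ) ∧ Associated p L.prod := by
  suffices ∀ q, q ∣ p → ∃ L : List α, (∀ ℓ ∈ L, P ℓ) ∧ Associated q L.prod from this p dvd_rfl
  intro q
  induction q using induction_on_prime with
  | h₁ => exact fun h0 ↦ absurd (zero_dvd_iff.mp h0) hp
  | h₂ u hu => exact fun _ ↦ ⟨[], by simp, by simpa using associated_one_iff_isUnit.mpr hu⟩
  | h₃ a g _ hg ih =>
    intro hga
    obtain ⟨ℓ, hℓ, hgℓ⟩ := h g hg (dvd_of_mul_right_dvd hga)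
    obtain ⟨L, hL, haL⟩ := ih (dvd_of_mul_left_dvd hga)
    exact ⟨ℓ :: L, List.forall_mem_cons.mpr ⟨hℓ, hL⟩, by simpa using hgℓ.mul_mul haL⟩

end UniqueFactorizationMonoid

namespace MvPolynomial

variable {σ R : Type*} [CommRing R]

def IsAllowableForm (ℓ : MvPolynomial σ R) : Prop :=
  (∃ i, ℓ = X i) ∨ (∃ i j, i ≠ j ∧ ℓ = X i + X j) ∨ (∃ i j, i ≠ j ∧ ℓ = X i - X j)

theorem irreducible_of_totalDegree_le_one_of_coeff_eq_one [IsDomain R] {f : MvPolynomial σ R}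
    {i : σ} (hdeg : f.totalDegree ≤ 1) (hcoeff : f.coeff (Finsupp.single i 1) = 1) :
    Irreducible f := by
  refine irreducible_of_totalDegree_eq_one (le_antisymm hdeg ?_) fun r hr ↦ ?_
  · simpa using le_totalDegree (s := Finsupp.single i 1) (by simp [hcoeff])
  · exact isUnit_of_dvd_one (hcoeff ▸ hr _)

theorem IsAllowableForm.irreducible [IsDomain R] {ℓ : MvPolynomial σ R} (h : IsAllowableForm ℓ) :
    Irreducible ℓ := by
  rcases h with ⟨i, rfl⟩ | ⟨i, j, hij, rfl⟩ | ⟨i, j, hij, rfl⟩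
  · exact irreducible_of_totalDegree_le_one_of_coeff_eq_one (i := i) (by simp) (by simp)
  · refine irreducible_of_totalDegree_le_one_of_coeff_eq_one (i := i)
      ((totalDegree_add _ _).trans (by simp)) ?_
    classical simp [coeff_X, Finsupp.single_left_inj one_ne_zero, hij.symm]
  · refine irreducible_of_totalDegree_le_one_of_coeff_eq_one (i := i)
      ((totalDegree_sub _ _).trans (by simp)) ?_
    classical simp [coeff_X, Finsupp.single_left_inj one_ne_zero, hij.symm]

theorem exists_eq_C_mul_of_associated [IsReduced R] {p q : MvPolynomial σ R}
    (h : Associated p q) : ∃ r, IsUnit r ∧ p = C r * q := by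
  obtain ⟨u, hu⟩ := h.symm
  obtain ⟨r, hr, hur⟩ := isUnit_iff_eq_C_of_isReduced.mp u.isUnit
  exact ⟨r, hr, by rw [← hu, hur, mul_comm]⟩

theorem exists_dvd_pow_of_forall_eval_eq_zero {K : Type*} [Field K] [IsAlgClosed K] [Finite σ]
    {p f : MvPolynomial σ K} (h : ∀ x, eval x p = 0 → eval x f = 0) : ∃ N, p ∣ f ^ N := by
  have hf : f ∈ vanishingIdeal K (zeroLocus K (Ideal.span {p})) := fun x hx ↦
    h x (by simpa using hx p (Ideal.mem_span_singleton_self p))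
  rw [vanishingIdeal_zeroLocus_eq_radical] at hf
  obtain ⟨N, hN⟩ := hf
  exact ⟨N, Ideal.mem_span_singleton.mp hN⟩

end MvPolynomial

namespace MonomialOrder

variable {σ R : Type*} (m : MonomialOrder σ)

theorem single_one_lt_or_gt {i j : σ} (hij : i ≠ j) :
    Finsupp.single i 1 ≺[m] Finsupp.single j 1 ∨ Finsupp.single j 1 ≺[m] Finsupp.single i 1 :=
  lt_or_gt_of_ne fun h ↦ hij <| by
    simpa [Finsupp.single_left_inj one_ne_zero] using m.toSyn.injective h

variable [CommRing R]

theorem leadingCoeff_X_add_X [Nontrivial R] {i j : σ} (hij : i ≠ j) :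
    m.leadingCoeff (X i + X j : MvPolynomial σ R) = 1 := by
  rcases m.single_one_lt_or_gt hij with h | h
  · rw [add_comm, m.leadingCoeff_add_of_lt (by rwa [degree_X, degree_X]), leadingCoeff_X]
  · rw [m.leadingCoeff_add_of_lt (by rwa [degree_X, degree_X]), leadingCoeff_X]

theorem leadingCoeff_X_sub_X [Nontrivial R] {i j : σ} (hij : i ≠ j) :
    m.leadingCoeff (X i - X j : MvPolynomial σ R) = 1 ∨
      m.leadingCoeff (X i - X j : MvPolynomial σ R) = -1 := by
  rcases m.single_one_lt_or_gt hij with h | h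
  · right
    rw [← neg_sub, m.leadingCoeff_neg, m.leadingCoeff_sub_of_lt (by rwa [degree_X, degree_X]),
      leadingCoeff_X]
  · left
    rw [m.leadingCoeff_sub_of_lt (by rwa [degree_X, degree_X]), leadingCoeff_X]

theorem _root_.MvPolynomial.IsAllowableForm.leadingCoeff_eq_one_or_neg_one [Nontrivial R]
    {ℓ : MvPolynomial σ R} (h : ℓ.IsAllowableForm) :
    m.leadingCoeff ℓ = 1 ∨ m.leadingCoeff ℓ = -1 := by
  rcases h with ⟨i, rfl⟩ | ⟨i, j, hij, rfl⟩ | ⟨i, j, hij, rfl⟩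
  · exact Or.inl m.leadingCoeff_X
  · exact Or.inl (m.leadingCoeff_X_add_X hij)
  · exact m.leadingCoeff_X_sub_X hij

variable [IsDomain R]

theorem leadingCoeff_list_prod_eq_one_or_neg_one {L : List (MvPolynomial σ R)}
    (hL : ∀ ℓ ∈ L, m.leadingCoeff ℓ = 1 ∨ m.leadingCoeff ℓ = -1) :
    m.leadingCoeff L.prod = 1 ∨ m.leadingCoeff L.prod = -1 := by
  induction L with
  | nil => simp
  | cons ℓ L ih =>
    rw [List.forall_mem_cons] at hL
    rw [List.prod_cons, leadingCoeff_mul]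
    rcases hL.1 with h | h <;> rcases ih hL.2 with h' | h' <;> simp [h, h']

theorem exists_intCast_eq_of_map_eq_C_mul_prod {q : MvPolynomial σ ℤ} {a : R}
    {L : List (MvPolynomial σ R)} (hL : ∀ ℓ ∈ L, m.leadingCoeff ℓ = 1 ∨ m.leadingCoeff ℓ = -1)
    (h : map (Int.castRingHom R) q = C a * L.prod) : ∃ z : ℤ, a = z := by
  have hz : m.leadingCoeff (map (Int.castRingHom R) q) = a * m.leadingCoeff L.prod := by
    rw [h, leadingCoeff_mul, leadingCoeff_C]
  rw [MonomialOrder.leadingCoeff, coeff_map, eq_intCast] at hz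
  rcases m.leadingCoeff_list_prod_eq_one_or_neg_one hL with h1 | h1 <;> rw [h1] at hz
  · exact ⟨_, by rw [hz, mul_one]⟩
  · exact ⟨-_, by rw [Int.cast_neg, hz, mul_neg_one, neg_neg]⟩

end MonomialOrder

theorem IsAllowableHyperplane.exists_isAllowableForm {n : ℕ} {H : Set (Fin n → ℂ)}
    (h : IsAllowableHyperplane n H) :
    ∃ ℓ : MvPolynomial (Fin n) ℂ, ℓ.IsAllowableForm ∧ H = {x | eval x ℓ = 0} := by
  rcases h with ⟨i, rfl⟩ | ⟨i, j, hij, rfl⟩ | ⟨i, j, hij, rfl⟩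
  · exact ⟨X i, Or.inl ⟨i, rfl⟩, by simp⟩
  · exact ⟨X i + X j, Or.inr (Or.inl ⟨i, j, hij, rfl⟩), by simp⟩
  · exact ⟨X i - X j, Or.inr (Or.inr ⟨i, j, hij, rfl⟩), by simp⟩

theorem IsAllowable.exists_forall_mem_eval_prod_eq_zero {n : ℕ} {A : Set (Fin n → ℂ)}
    (hA : IsAllowable n A) (hA_ne : A ≠ Set.univ) :
    ∃ (k : ℕ) (ℓ : Fin k → MvPolynomial (Fin n) ℂ),
      (∀ i, (ℓ i).IsAllowableForm) ∧ ∀ x ∈ A, eval x (∏ i, ℓ i) = 0 := by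
  obtain ⟨k, m, H, hH, rfl⟩ := hA
  have hm : ∀ i, 0 < m i := fun i ↦ Nat.pos_of_ne_zero fun h0 ↦ hA_ne <|
    Set.eq_univ_of_univ_subset <| Set.subset_iUnion_of_subset i <| by
      have : IsEmpty (Fin (m i)) := by rw [h0]; infer_instance
      simp
  choose ℓ hℓ hHℓ using fun i ↦ (hH i ⟨0, hm i⟩).exists_isAllowableForm
  refine ⟨k, ℓ, hℓ, fun x hx ↦ ?_⟩
  obtain ⟨i, hi⟩ := Set.mem_iUnion.mp hx
  have hxi : x ∈ H i ⟨0, hm i⟩ := Set.mem_iInter.mp hi _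
  rw [hHℓ] at hxi
  rw [map_prod]
  exact Finset.prod_eq_zero (Finset.mem_univ i) hxi

theorem exists_eq_C_mul_prod_of_isAllowable {n : ℕ} {p : MvPolynomial (Fin n) ℂ} (hp : p ≠ 0)
    (hV : IsAllowable n {x | eval x p = 0}) :
    ∃ a ≠ 0, ∃ L : List (MvPolynomial (Fin n) ℂ), (∀ ℓ ∈ L, ℓ.IsAllowableForm) ∧
      p = C a * L.prod := by
  have hV_ne : {x | eval x p = 0} ≠ Set.univ := fun h ↦ hp <| MvPolynomial.funext fun x ↦ by
    simpa using Set.eq_univ_iff_forall.mp h x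
  obtain ⟨k, ℓ, hℓ, hvan⟩ := hV.exists_forall_mem_eval_prod_eq_zero hV_ne
  obtain ⟨N, hN⟩ := exists_dvd_pow_of_forall_eval_eq_zero hvan
  obtain ⟨L, hL, hpL⟩ := UniqueFactorizationMonoid.exists_associated_list_prod_of_forall_prime_dvd
    (P := IsAllowableForm) hp fun g hg hgp ↦ by
      obtain ⟨i, -, hgi⟩ := hg.exists_mem_finset_dvd (hg.dvd_of_dvd_pow (hgp.trans hN))
      exact ⟨ℓ i, hℓ i, hg.irreducible.associated_of_dvd (hℓ i).irreducible hgi⟩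
  obtain ⟨a, ha, rfl⟩ := exists_eq_C_mul_of_associated hpL
  exact ⟨a, ha.ne_zero, L, hL, rfl⟩

theorem stmt_4_general (n : ℕ) (p : MvPolynomial (Fin n) ℂ)
    (hp : 0 < p.totalDegree)
    (hint : ∃ q : MvPolynomial (Fin n) ℤ, MvPolynomial.map (Int.castRingHom ℂ) q = p)
    (hV : IsAllowable n {x | MvPolynomial.eval x p = 0}) :
    ∃ c : ℤ, c ≠ 0 ∧ ∃ (r : ℕ) (ℓ : Fin r → MvPolynomial (Fin n) ℂ),
      (∀ t,
        (∃ i, ℓ t = MvPolynomial.X i) ∨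
        (∃ i j, i ≠ j ∧ ℓ t = MvPolynomial.X i + MvPolynomial.X j) ∨
        (∃ i j, i ≠ j ∧ ℓ t = MvPolynomial.X i - MvPolynomial.X j)) ∧
      p = MvPolynomial.C (c : ℂ) * ∏ t, ℓ t := by
  obtain ⟨q, rfl⟩ := hint
  have hp0 : map (Int.castRingHom ℂ) q ≠ 0 := fun h ↦ by simp [h] at hp
  obtain ⟨a, ha, L, hL, hpL⟩ := exists_eq_C_mul_prod_of_isAllowable hp0 hV
  obtain ⟨c, rfl⟩ := MonomialOrder.lex.exists_intCast_eq_of_map_eq_C_mul_prod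
    (fun ℓ hℓ ↦ (hL ℓ hℓ).leadingCoeff_eq_one_or_neg_one _) hpL
  exact ⟨c, by exact_mod_cast ha, L.length, fun t ↦ L[(t : ℕ)], fun t ↦ hL _ (List.getElem_mem _),
    by rw [Fin.prod_univ_getElem, hpL]⟩

/-- A nonconstant complex polynomial with integer coefficients whose variety
is allowable is a nonzero integer times a product of linear forms `x_i`, `x_i + x_j`,
`x_i - x_j`. -/
theorem stmt_4 (n : ℕ) (hn : 1 ≤ n) (p : MvPolynomial (Fin n) ℂ)
    (hp : 0 < p.totalDegree)
    (hint : ∃ q : MvPolynomial (Fin n) ℤ, MvPolynomial.map (Int.castRingHom ℂ) q = p)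
    (hV : IsAllowable n {x | MvPolynomial.eval x p = 0}) :
    ∃ c : ℤ, c ≠ 0 ∧ ∃ (r : ℕ) (ℓ : Fin r → MvPolynomial (Fin n) ℂ),
      (∀ t,
        (∃ i, ℓ t = MvPolynomial.X i) ∨
        (∃ i j, i ≠ j ∧ ℓ t = MvPolynomial.X i + MvPolynomial.X j) ∨
        (∃ i j, i ≠ j ∧ ℓ t = MvPolynomial.X i - MvPolynomial.X j)) ∧
      p = MvPolynomial.C (c : ℂ) * ∏ t, ℓ t :=
  stmt_4_general n p hp hint hV
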